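/- Let (A, ∙) be a commutative associative superalgebra and r ∈ A⊗A homogeneous of even total parity. The map Δ(x) = (L_∙(x)⊗id - (-1)^{|x||r1|} id⊗L_∙(x))r makes (A, Δ) a cocommutative coassociative supercoalgebra if and only if for all x: (L_∙(x)⊗id - (-1)^{|x||r1|} id⊗L_∙(x))(r + τ(r)) = 0 and (L_∙(x)⊗id⊗id - id⊗id⊗T_∙(x))(r13∙r12 - r12∙r23 + r23∙r13) = 0, where T_∙(x)y = y∙x. -/

import Mathlib

open TensorProduct

/-- The Koszul sign `(-1)^{ij}` for parities `i j : ZMod 2`. -/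
def sgn (K : Type) [Field K] (i j : ZMod 2) : K := (-1 : K) ^ (i.val * j.val)

/-- The image of `p ⊗ q` inside `A ⊗ A`. -/
noncomputable def tsub (K : Type) [Field K] {A : Type} [AddCommGroup A] [Module K A]
    (p q : Submodule K A) : Submodule K (A ⊗[K] A) :=
  LinearMap.range (TensorProduct.map p.subtype q.subtype)

/-- The coboundary map `Δ(x) = (L(x)⊗id - (-1)^{|x||r₁|} id⊗L(x)) r`, where
`c2` is the sign-twisted operator `x ↦ (-1)^{|x||·|} id⊗L(x)`. -/
noncomputable def cobAss {K A : Type} [Field K] [AddCommGroup A] [Module K A]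
    (mu : A →ₗ[K] A →ₗ[K] A)
    (c2 : A →ₗ[K] (A ⊗[K] A) →ₗ[K] (A ⊗[K] A)) (r : A ⊗[K] A) :
    A →ₗ[K] A ⊗[K] A where
  toFun x := TensorProduct.map (mu x) LinearMap.id r - c2 x r
  map_add' x y := by
    simp only [map_add, TensorProduct.map_add_left, LinearMap.add_apply]
    abel
  map_smul' c x := by
    simp only [map_smul, TensorProduct.map_smul_left, LinearMap.smul_apply,
      RingHom.id_apply, smul_sub]

private lemma zmod2_cases : ∀ i : ZMod 2, i = 0 ∨ i = 1 := by decide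
private lemma zmod2_11 : (1 + 1 : ZMod 2) = 0 := by decide
private lemma zmod2_add_add : ∀ i j : ZMod 2, i + (i + j) = j := by decide

section aux
variable {K A : Type} [Field K] [AddCommGroup A] [Module K A]

private lemma sgn00 : sgn K 0 0 = 1 := by simp [sgn]
private lemma sgn01 : sgn K 0 1 = 1 := by simp [sgn]
private lemma sgn10 : sgn K 1 0 = 1 := by simp [sgn]
private lemma sgn11 : sgn K 1 1 = -1 := by simp [sgn, ZMod.val_one]

private lemma tmul_mem_tsub {p q : Submodule K A} {a b : A} (ha : a ∈ p) (hb : b ∈ q) :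
    a ⊗ₜ[K] b ∈ tsub K p q :=
  ⟨(⟨a, ha⟩ : p) ⊗ₜ[K] (⟨b, hb⟩ : q), by simp⟩

private lemma cobAss_apply (mu : A →ₗ[K] A →ₗ[K] A)
    (c2 : A →ₗ[K] (A ⊗[K] A) →ₗ[K] (A ⊗[K] A)) (r : A ⊗[K] A) (x : A) :
    cobAss mu c2 r x = TensorProduct.map (mu x) LinearMap.id r - c2 x r := rfl

private lemma add_eq_zero_of' {M : Type*} [AddCommGroup M] {s t : M}
    (hs : s = 0) (ht : t = 0) : s + t = 0 := by rw [hs, ht, add_zero]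

end aux

set_option maxHeartbeats 1000000000 in
/-- for a commutative associative superalgebra `(A, ∙)` and an
even `r ∈ A⊗A`, the coboundary map `Δ` makes `(A, Δ)` a cocommutative
coassociative supercoalgebra iff
`(L(x)⊗id - (-1)^{|x||r₁|}id⊗L(x))(r + τ(r)) = 0` and
`(L(x)⊗id⊗id - id⊗id⊗T(x))(A(r)) = 0` for all `x`, where `A(r)` is the
super AYBE element. -/
theorem stmt_9 {K A : Type} [Field K] [CharZero K]
    [AddCommGroup A] [Module K A]
    (𝒜 : ZMod 2 → Submodule K A) (hsup : 𝒜 0 ⊔ 𝒜 1 = ⊤)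
    (mu : A →ₗ[K] A →ₗ[K] A)
    -- (A, mu) is a commutative associative superalgebra
    (hgrade : ∀ i j, ∀ x ∈ 𝒜 i, ∀ y ∈ 𝒜 j, mu x y ∈ 𝒜 (i+j))
    (hcomm : ∀ i j, ∀ x ∈ 𝒜 i, ∀ y ∈ 𝒜 j, mu x y = sgn K i j • mu y x)
    (hassoc : ∀ x y z : A, mu (mu x y) z = mu x (mu y z))
    -- the super twist τ
    (τ : (A ⊗[K] A) →ₗ[K] A ⊗[K] A)
    (hτ : ∀ i j, ∀ x ∈ 𝒜 i, ∀ y ∈ 𝒜 j, τ (x ⊗ₜ[K] y) = sgn K i j • (y ⊗ₜ[K] x))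
    -- the sign-twisted operator (-1)^{|x||·|} id⊗L(x)
    (c2 : A →ₗ[K] (A ⊗[K] A) →ₗ[K] (A ⊗[K] A))
    (hc2 : ∀ p i, ∀ x ∈ 𝒜 p, ∀ u ∈ 𝒜 i, ∀ v : A,
      c2 x (u ⊗ₜ[K] v) = sgn K p i • (u ⊗ₜ[K] mu x v))
    -- the three super AYBE product builders
    (ay1 ay2 ay3 : (A ⊗[K] A) →ₗ[K] (A ⊗[K] A) →ₗ[K] A ⊗[K] (A ⊗[K] A))
    (hay1 : ∀ x y z w : A,
      ay1 (x ⊗ₜ[K] y) (z ⊗ₜ[K] w) = mu x z ⊗ₜ[K] (w ⊗ₜ[K] y))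
    (hay2 : ∀ x y z w : A,
      ay2 (x ⊗ₜ[K] y) (z ⊗ₜ[K] w) = x ⊗ₜ[K] (mu y z ⊗ₜ[K] w))
    (hay3 : ∀ x y z w : A,
      ay3 (x ⊗ₜ[K] y) (z ⊗ₜ[K] w) = z ⊗ₜ[K] (x ⊗ₜ[K] mu y w))
    -- r is homogeneous of even total parity
    (r : A ⊗[K] A)
    (hr : r ∈ tsub K (𝒜 0) (𝒜 0) ⊔ tsub K (𝒜 1) (𝒜 1)) :
    -- (A, Δ) is a cocommutative coassociative supercoalgebra
    ((∀ i, ∀ x ∈ 𝒜 i,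
        cobAss mu c2 r x ∈ tsub K (𝒜 0) (𝒜 i) ⊔ tsub K (𝒜 1) (𝒜 (i+1))) ∧
     (∀ x : A, τ (cobAss mu c2 r x) = cobAss mu c2 r x) ∧
     (∀ x : A,
        TensorProduct.map LinearMap.id (cobAss mu c2 r) (cobAss mu c2 r x)
          = TensorProduct.assoc K A A A
              (TensorProduct.map (cobAss mu c2 r) LinearMap.id
                (cobAss mu c2 r x))))
    ↔
    ((∀ p, ∀ x ∈ 𝒜 p,
        TensorProduct.map (mu x) LinearMap.id (r + τ r) - c2 x (r + τ r) = 0) ∧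
     (∀ x : A,
        TensorProduct.map (mu x) LinearMap.id (ay1 r r - ay2 r r + ay3 r r)
          - TensorProduct.map LinearMap.id
              (TensorProduct.map LinearMap.id (mu.flip x))
              (ay1 r r - ay2 r r + ay3 r r) = 0)) := by
  -- decomposition of arbitrary elements of A into homogeneous parts
  have decomp : ∀ x : A, ∃ y ∈ 𝒜 0, ∃ z ∈ 𝒜 1, y + z = x := by
    intro x
    have hx : x ∈ 𝒜 0 ⊔ 𝒜 1 := by rw [hsup]; exact Submodule.mem_top
    exact Submodule.mem_sup.mp hx
  -- generating set for the even part
  set Gs : Set (A ⊗[K] A) :=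
    {t | ∃ j a b, a ∈ 𝒜 j ∧ b ∈ 𝒜 j ∧ t = a ⊗ₜ[K] b} with hGs
  have hrG : r ∈ Submodule.span K Gs := by
    refine (sup_le ?_ ?_ : tsub K (𝒜 0) (𝒜 0) ⊔ tsub K (𝒜 1) (𝒜 1) ≤ _) hr
    · rw [tsub, TensorProduct.range_map_eq_span_tmul]
      apply Submodule.span_le.mpr
      rintro t ⟨m, n, rfl⟩
      exact Submodule.subset_span ⟨0, m, n, m.2, n.2, rfl⟩
    · rw [tsub, TensorProduct.range_map_eq_span_tmul]
      apply Submodule.span_le.mpr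
      rintro t ⟨m, n, rfl⟩
      exact Submodule.subset_span ⟨1, m, n, m.2, n.2, rfl⟩
  -- the coboundary on pure tensors
  have cob_tm : ∀ (q j₀ : ZMod 2) (y : A), y ∈ 𝒜 q → ∀ c : A, c ∈ 𝒜 j₀ → ∀ d : A,
      cobAss mu c2 (c ⊗ₜ[K] d) y
        = mu y c ⊗ₜ[K] d - sgn K q j₀ • (c ⊗ₜ[K] mu y d) := by
    intro q j0 y hy c hc d
    rw [cobAss_apply, TensorProduct.map_tmul, hc2 q j0 y hy c hc d]
    simp
  have cob_add : ∀ (u v : A ⊗[K] A) (x : A),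
      cobAss mu c2 (u + v) x = cobAss mu c2 u x + cobAss mu c2 v x := by
    intro u v x
    simp only [cobAss_apply, map_add]
    abel
  have cob_smulr : ∀ (c : K) (u : A ⊗[K] A) (x : A),
      cobAss mu c2 (c • u) x = c • cobAss mu c2 u x := by
    intro c u x
    simp only [cobAss_apply, map_smul, smul_sub]
  have cob_zero : ∀ x : A, cobAss mu c2 (0 : A ⊗[K] A) x = 0 := by
    intro x; simp [cobAss_apply]
  have cob_addL : ∀ u v : A ⊗[K] A,
      cobAss mu c2 (u + v) = cobAss mu c2 u + cobAss mu c2 v :=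
    fun u v => LinearMap.ext fun x => by rw [cob_add]; rfl
  have cob_smulL : ∀ (c : K) (u : A ⊗[K] A),
      cobAss mu c2 (c • u) = c • cobAss mu c2 u :=
    fun c u => LinearMap.ext fun x => by rw [cob_smulr]; rfl
  have cob_zeroL : cobAss mu c2 (0 : A ⊗[K] A) = 0 :=
    LinearMap.ext fun x => cob_zero x
  -- Part 1: the grading of Δ (unconditional)
  have mem_part : ∀ (i j : ZMod 2) (c d : A), c ∈ 𝒜 j → d ∈ 𝒜 (i + j) →
      c ⊗ₜ[K] d ∈ tsub K (𝒜 0) (𝒜 i) ⊔ tsub K (𝒜 1) (𝒜 (i+1)) := by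
    intro i j c d hc hd
    rcases zmod2_cases j with rfl | rfl
    · exact Submodule.mem_sup_left (tmul_mem_tsub hc (by simpa using hd))
    · exact Submodule.mem_sup_right (tmul_mem_tsub hc hd)
  have part1 : ∀ i, ∀ x ∈ 𝒜 i,
      cobAss mu c2 r x ∈ tsub K (𝒜 0) (𝒜 i) ⊔ tsub K (𝒜 1) (𝒜 (i+1)) := by
    intro i x hx
    refine Submodule.span_induction
      (p := fun u _ => cobAss mu c2 u x ∈ tsub K (𝒜 0) (𝒜 i) ⊔ tsub K (𝒜 1) (𝒜 (i+1)))
      ?_ ?_ ?_ ?_ hrG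
    · rintro t ⟨j, a, b, ha, hb, rfl⟩
      rw [cob_tm i j x hx a ha b]
      refine sub_mem ?_ (Submodule.smul_mem _ _ ?_)
      · exact mem_part i (i+j) _ _ (hgrade i j x hx a ha)
          (by rw [zmod2_add_add i j]; exact hb)
      · exact mem_part i j a (mu x b) ha (hgrade i j x hx b hb)
    · show cobAss mu c2 (0 : A ⊗[K] A) x ∈ _
      rw [cob_zero]; exact zero_mem _
    · intro u v _ _ hu hv; rw [cob_add]; exact add_mem hu hv
    · intro c u _ hu; rw [cob_smulr]; exact Submodule.smul_mem _ _ hu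
  -- key identity for cocommutativity
  have key2 : ∀ x : A,
      cobAss mu c2 r x - τ (cobAss mu c2 r x) = cobAss mu c2 (r + τ r) x := by
    have hhom : ∀ p, ∀ x ∈ 𝒜 p,
        cobAss mu c2 r x - τ (cobAss mu c2 r x) = cobAss mu c2 (r + τ r) x := by
      intro p x hx
      refine Submodule.span_induction
        (p := fun u _ => cobAss mu c2 u x - τ (cobAss mu c2 u x)
          = cobAss mu c2 (u + τ u) x) ?_ ?_ ?_ ?_ hrG
      · rintro t ⟨j, a, b, ha, hb, rfl⟩
        have hxa := hgrade p j x hx a ha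
        have hxb := hgrade p j x hx b hb
        rw [hτ j j a ha b hb, cob_add, cob_smulr,
          cob_tm p j x hx a ha b, cob_tm p j x hx b hb a,
          map_sub, map_smul, hτ (p+j) j _ hxa b hb, hτ j (p+j) a ha _ hxb]
        rcases zmod2_cases p with rfl | rfl <;> rcases zmod2_cases j with rfl | rfl <;>
          simp only [sgn00, sgn01, sgn10, sgn11, zmod2_11, zero_add, add_zero,
            one_smul, neg_smul, neg_neg, smul_sub, smul_smul, neg_mul, one_mul,
            mul_one, mul_neg] <;>
          module
      · show cobAss mu c2 (0 : A ⊗[K] A) x - τ (cobAss mu c2 (0 : A ⊗[K] A) x)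
            = cobAss mu c2 ((0 : A ⊗[K] A) + τ 0) x
        simp [cob_zero]
      · intro u v _ _ hu hv
        rw [map_add τ u v,
          show u + v + (τ u + τ v) = (u + τ u) + (v + τ v) by abel,
          cob_add (u + τ u) (v + τ v) x, cob_add u v x,
          map_add τ (cobAss mu c2 u x) (cobAss mu c2 v x), ← hu, ← hv]
        abel
      · intro c u _ hu
        rw [map_smul τ, ← smul_add, cob_smulr, cob_smulr, map_smul, ← hu,
          smul_sub]
    intro x
    obtain ⟨y, hy, z, hz, rfl⟩ := decomp x
    simp only [map_add]
    rw [← hhom 0 y hy, ← hhom 1 z hz]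
    abel
  -- key identity for coassociativity
  have key3 : ∀ x : A,
      (TensorProduct.map LinearMap.id (cobAss mu c2 r) (cobAss mu c2 r x)
        - TensorProduct.assoc K A A A
            (TensorProduct.map (cobAss mu c2 r) LinearMap.id (cobAss mu c2 r x)))
      + (TensorProduct.map (mu x) LinearMap.id (ay1 r r - ay2 r r + ay3 r r)
          - TensorProduct.map LinearMap.id
              (TensorProduct.map LinearMap.id (mu.flip x))
              (ay1 r r - ay2 r r + ay3 r r)) = 0 := by
    have key3hom : ∀ p, ∀ x ∈ 𝒜 p,
        (TensorProduct.map LinearMap.id (cobAss mu c2 r) (cobAss mu c2 r x)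
          - TensorProduct.assoc K A A A
              (TensorProduct.map (cobAss mu c2 r) LinearMap.id (cobAss mu c2 r x)))
        + (TensorProduct.map (mu x) LinearMap.id (ay1 r r - ay2 r r + ay3 r r)
            - TensorProduct.map LinearMap.id
                (TensorProduct.map LinearMap.id (mu.flip x))
                (ay1 r r - ay2 r r + ay3 r r)) = 0 := by
      intro p x hx
      have hbil : ∀ u ∈ Submodule.span K Gs, ∀ v ∈ Submodule.span K Gs,
          ((TensorProduct.map LinearMap.id (cobAss mu c2 v) (cobAss mu c2 u x)
            - TensorProduct.assoc K A A A
                (TensorProduct.map (cobAss mu c2 v) LinearMap.id (cobAss mu c2 u x)))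
            + (TensorProduct.map LinearMap.id (cobAss mu c2 u) (cobAss mu c2 v x)
              - TensorProduct.assoc K A A A
                  (TensorProduct.map (cobAss mu c2 u) LinearMap.id (cobAss mu c2 v x))))
          + ((TensorProduct.map (mu x) LinearMap.id (ay1 u v - ay2 u v + ay3 u v)
              - TensorProduct.map LinearMap.id
                  (TensorProduct.map LinearMap.id (mu.flip x))
                  (ay1 u v - ay2 u v + ay3 u v))
            + (TensorProduct.map (mu x) LinearMap.id (ay1 v u - ay2 v u + ay3 v u)
              - TensorProduct.map LinearMap.id
                  (TensorProduct.map LinearMap.id (mu.flip x))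
                  (ay1 v u - ay2 v u + ay3 v u))) = 0 := by
        intro u hu
        induction hu using Submodule.span_induction with
        | mem t ht =>
          obtain ⟨j, a, b, ha, hb, rfl⟩ := ht
          intro v hv
          induction hv using Submodule.span_induction with
          | mem t' ht' =>
            obtain ⟨j', a', b', ha', hb', rfl⟩ := ht'
            have hxa := hgrade p j x hx a ha
            have hxb := hgrade p j x hx b hb
            have hxa' := hgrade p j' x hx a' ha'
            have hxb' := hgrade p j' x hx b' hb'
            have e0 := cob_tm p j x hx a ha b
            have e0' := cob_tm p j' x hx a' ha' b'
            have e1 := cob_tm j j' b hb a' ha' b'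
            have e2 := cob_tm (p+j) j' (mu x b) hxb a' ha' b'
            have e3 := cob_tm (p+j) j' (mu x a) hxa a' ha' b'
            have e4 := cob_tm j j' a ha a' ha' b'
            have e5 := cob_tm j' j b' hb' a ha b
            have e6 := cob_tm (p+j') j (mu x b') hxb' a ha b
            have e7 := cob_tm (p+j') j (mu x a') hxa' a ha b
            have e8 := cob_tm j' j a' ha' a ha b
            have c1 : mu a' a = sgn K j' j • mu a a' := hcomm j' j a' ha' a ha
            have c2'' : mu b' a = sgn K j' j • mu a b' := hcomm j' j b' hb' a ha
            have c3 : mu a' b = sgn K j' j • mu b a' := hcomm j' j a' ha' b hb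
            have c4 : mu b' b = sgn K j' j • mu b b' := hcomm j' j b' hb' b hb
            have k1 : mu b x = sgn K j p • mu x b := hcomm j p b hb x hx
            have k2 : mu b' x = sgn K j' p • mu x b' := hcomm j' p b' hb' x hx
            have c9 : mu b (mu x b')
                = (sgn K j (p+j') * sgn K j' j) • mu x (mu b b') := by
              rw [hcomm j (p+j') b hb (mu x b') hxb', hassoc,
                hcomm j' j b' hb' b hb, map_smul, smul_smul]
            have c10 : mu b' (mu x b) = sgn K j' (p+j) • mu x (mu b b') := by
              rw [hcomm j' (p+j) b' hb' (mu x b) hxb, hassoc]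
            simp only [e0, e0', e1, e2, e3, e4, e5, e6, e7, e8, hay1, hay2, hay3,
              map_sub, map_add, map_smul, TensorProduct.map_tmul,
              LinearMap.id_coe, id_eq, TensorProduct.assoc_tmul,
              TensorProduct.tmul_sub, TensorProduct.sub_tmul,
              TensorProduct.tmul_smul, ← TensorProduct.smul_tmul',
              LinearMap.flip_apply, hassoc, c1, c2'', c3, c4, k1, k2, c9, c10,
              smul_smul, smul_sub, smul_add]
            rcases zmod2_cases p with rfl | rfl <;>
              rcases zmod2_cases j with rfl | rfl <;>
              rcases zmod2_cases j' with rfl | rfl <;>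
              simp only [sgn00, sgn01, sgn10, sgn11, zmod2_11, zero_add, add_zero,
                one_smul, neg_smul, one_mul, mul_one, neg_mul, mul_neg, neg_neg] <;>
              module
          | zero =>
            simp only [cob_zeroL, cob_zero, map_zero, LinearMap.zero_apply,
              TensorProduct.map_zero_right, TensorProduct.map_zero_left,
              sub_zero, add_zero, zero_add, sub_self]
          | add v v' hv1m hv2m h1' h2' =>
            have H := add_eq_zero_of' h1' h2'
            rw [← H]
            simp only [cob_addL, TensorProduct.map_add_right,
              TensorProduct.map_add_left, map_add, map_sub, LinearMap.add_apply]
            abel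
          | smul c v hvm h1' =>
            have He : ∀ w1 w2 : A ⊗[K] A,
                ((TensorProduct.map LinearMap.id (cobAss mu c2 (c • w2))
                    (cobAss mu c2 w1 x)
                - TensorProduct.assoc K A A A
                    (TensorProduct.map (cobAss mu c2 (c • w2)) LinearMap.id
                      (cobAss mu c2 w1 x)))
                + (TensorProduct.map LinearMap.id (cobAss mu c2 w1)
                    (cobAss mu c2 (c • w2) x)
                  - TensorProduct.assoc K A A A
                      (TensorProduct.map (cobAss mu c2 w1) LinearMap.id
                        (cobAss mu c2 (c • w2) x))))
                + ((TensorProduct.map (mu x) LinearMap.id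
                      (ay1 w1 (c • w2) - ay2 w1 (c • w2) + ay3 w1 (c • w2))
                    - TensorProduct.map LinearMap.id
                        (TensorProduct.map LinearMap.id (mu.flip x))
                        (ay1 w1 (c • w2) - ay2 w1 (c • w2) + ay3 w1 (c • w2)))
                  + (TensorProduct.map (mu x) LinearMap.id
                        (ay1 (c • w2) w1 - ay2 (c • w2) w1 + ay3 (c • w2) w1)
                    - TensorProduct.map LinearMap.id
                        (TensorProduct.map LinearMap.id (mu.flip x))
                        (ay1 (c • w2) w1 - ay2 (c • w2) w1 + ay3 (c • w2) w1)))
                = c • (((TensorProduct.map LinearMap.id (cobAss mu c2 w2)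
                    (cobAss mu c2 w1 x)
                - TensorProduct.assoc K A A A
                    (TensorProduct.map (cobAss mu c2 w2) LinearMap.id
                      (cobAss mu c2 w1 x)))
                + (TensorProduct.map LinearMap.id (cobAss mu c2 w1)
                    (cobAss mu c2 w2 x)
                  - TensorProduct.assoc K A A A
                      (TensorProduct.map (cobAss mu c2 w1) LinearMap.id
                        (cobAss mu c2 w2 x))))
                + ((TensorProduct.map (mu x) LinearMap.id
                      (ay1 w1 w2 - ay2 w1 w2 + ay3 w1 w2)
                    - TensorProduct.map LinearMap.id
                        (TensorProduct.map LinearMap.id (mu.flip x))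
                        (ay1 w1 w2 - ay2 w1 w2 + ay3 w1 w2))
                  + (TensorProduct.map (mu x) LinearMap.id
                        (ay1 w2 w1 - ay2 w2 w1 + ay3 w2 w1)
                    - TensorProduct.map LinearMap.id
                        (TensorProduct.map LinearMap.id (mu.flip x))
                        (ay1 w2 w1 - ay2 w2 w1 + ay3 w2 w1)))) := by
              intro w1 w2
              simp only [cob_smulL, cob_smulr, map_smul, map_sub, map_add,
                TensorProduct.map_smul_right, TensorProduct.map_smul_left,
                LinearMap.smul_apply, smul_sub, smul_add]
            rw [He, h1', smul_zero]
        | zero =>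
          intro v hv
          simp only [cob_zeroL, cob_zero, map_zero, LinearMap.zero_apply,
            TensorProduct.map_zero_right, TensorProduct.map_zero_left,
            sub_zero, add_zero, zero_add, sub_self]
        | add u1 u2 hu1m hu2m h1' h2' =>
          intro v hv
          have H := add_eq_zero_of' (h1' v hv) (h2' v hv)
          rw [← H]
          simp only [cob_addL, TensorProduct.map_add_right,
            TensorProduct.map_add_left, map_add, map_sub, LinearMap.add_apply]
          abel
        | smul c u1 hu1m h1' =>
          intro v hv
          have He : ∀ w1 w2 : A ⊗[K] A,
              ((TensorProduct.map LinearMap.id (cobAss mu c2 w2)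
                  (cobAss mu c2 (c • w1) x)
              - TensorProduct.assoc K A A A
                  (TensorProduct.map (cobAss mu c2 w2) LinearMap.id
                    (cobAss mu c2 (c • w1) x)))
              + (TensorProduct.map LinearMap.id (cobAss mu c2 (c • w1))
                  (cobAss mu c2 w2 x)
                - TensorProduct.assoc K A A A
                    (TensorProduct.map (cobAss mu c2 (c • w1)) LinearMap.id
                      (cobAss mu c2 w2 x))))
              + ((TensorProduct.map (mu x) LinearMap.id
                    (ay1 (c • w1) w2 - ay2 (c • w1) w2 + ay3 (c • w1) w2)
                  - TensorProduct.map LinearMap.id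
                      (TensorProduct.map LinearMap.id (mu.flip x))
                      (ay1 (c • w1) w2 - ay2 (c • w1) w2 + ay3 (c • w1) w2))
                + (TensorProduct.map (mu x) LinearMap.id
                      (ay1 w2 (c • w1) - ay2 w2 (c • w1) + ay3 w2 (c • w1))
                  - TensorProduct.map LinearMap.id
                      (TensorProduct.map LinearMap.id (mu.flip x))
                      (ay1 w2 (c • w1) - ay2 w2 (c • w1) + ay3 w2 (c • w1))))
              = c • (((TensorProduct.map LinearMap.id (cobAss mu c2 w2)
                  (cobAss mu c2 w1 x)
              - TensorProduct.assoc K A A A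
                  (TensorProduct.map (cobAss mu c2 w2) LinearMap.id
                    (cobAss mu c2 w1 x)))
              + (TensorProduct.map LinearMap.id (cobAss mu c2 w1)
                  (cobAss mu c2 w2 x)
                - TensorProduct.assoc K A A A
                    (TensorProduct.map (cobAss mu c2 w1) LinearMap.id
                      (cobAss mu c2 w2 x))))
              + ((TensorProduct.map (mu x) LinearMap.id
                    (ay1 w1 w2 - ay2 w1 w2 + ay3 w1 w2)
                  - TensorProduct.map LinearMap.id
                      (TensorProduct.map LinearMap.id (mu.flip x))
                      (ay1 w1 w2 - ay2 w1 w2 + ay3 w1 w2))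
                + (TensorProduct.map (mu x) LinearMap.id
                      (ay1 w2 w1 - ay2 w2 w1 + ay3 w2 w1)
                  - TensorProduct.map LinearMap.id
                      (TensorProduct.map LinearMap.id (mu.flip x))
                      (ay1 w2 w1 - ay2 w2 w1 + ay3 w2 w1)))) := by
            intro w1 w2
            simp only [cob_smulL, cob_smulr, map_smul, map_sub, map_add,
              TensorProduct.map_smul_right, TensorProduct.map_smul_left,
              LinearMap.smul_apply, smul_sub, smul_add]
          rw [He, h1' v hv, smul_zero]
      have h := hbil r hrG r hrG
      have h2 : (2 : K) • ((TensorProduct.map LinearMap.id (cobAss mu c2 r)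
            (cobAss mu c2 r x)
          - TensorProduct.assoc K A A A
              (TensorProduct.map (cobAss mu c2 r) LinearMap.id (cobAss mu c2 r x)))
        + (TensorProduct.map (mu x) LinearMap.id (ay1 r r - ay2 r r + ay3 r r)
            - TensorProduct.map LinearMap.id
                (TensorProduct.map LinearMap.id (mu.flip x))
                (ay1 r r - ay2 r r + ay3 r r))) = 0 := by
        rw [smul_add, two_smul, two_smul]
        exact h
      exact (smul_eq_zero.mp h2).resolve_left two_ne_zero
    intro x
    obtain ⟨y, hy, z, hz, rfl⟩ := decomp x
    have H := add_eq_zero_of' (key3hom 0 y hy) (key3hom 1 z hz)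
    rw [← H]
    simp only [map_add, TensorProduct.map_add_left, TensorProduct.map_add_right,
      LinearMap.add_apply]
    abel
  constructor
  · rintro ⟨_, hco, hca⟩
    constructor
    · intro p x hx
      have h := (key2 x).symm
      rw [hco x, sub_self] at h
      rw [← cobAss_apply]
      exact h
    · intro x
      have h := key3 x
      rw [sub_eq_zero_of_eq (hca x), zero_add] at h
      exact h
  · rintro ⟨h1, h2⟩
    have h1' : ∀ x : A, cobAss mu c2 (r + τ r) x = 0 := by
      intro x
      obtain ⟨y, hy, z, hz, rfl⟩ := decomp x
      rw [map_add, cobAss_apply, cobAss_apply, h1 0 y hy, h1 1 z hz, add_zero]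
    refine ⟨part1, ?_, ?_⟩
    · intro x
      have h := key2 x
      rw [h1' x] at h
      exact (sub_eq_zero.mp h).symm
    · intro x
      have h := key3 x
      rw [h2 x, add_zero] at h
      exact sub_eq_zero.mp h
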